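/- For any integer n ≥ 1 and real δ with 0 ≤ δ ≤ 1/2, the sum of binomial coefficients ∑_{w=0}^{⌊nδ⌋} C(n,w) is at most 2^{n·h(δ)}, where h(x) = -x·log₂x - (1-x)·log₂(1-x) is the binary entropy function. -/

import Mathlib

/-!
Chernoff-type counting: put the binomial distribution with parameter `δ` on the subsets
of an `n`-set. Since `δ ≤ 1 - δ`, every subset of size `w ≤ nδ` has probability
`δ ^ w (1 - δ) ^ (n - w) ≥ δ ^ (nδ) (1 - δ) ^ (n(1 - δ)) = 2 ^ (-n h(δ))`, and the total
probability of these subsets is at most `1`.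
-/

noncomputable def binEnt (x : ℝ) : ℝ :=
  -(x * Real.logb 2 x) - (1 - x) * Real.logb 2 (1 - x)

open Finset Real

theorem two_rpow_mul_binEnt {δ : ℝ} (hδ0 : 0 < δ) (hδ1 : δ < 1) (x : ℝ) :
    (2 : ℝ) ^ (x * binEnt δ) = (δ ^ (x * δ) * (1 - δ) ^ (x * (1 - δ)))⁻¹ := by
  have hpow : ∀ {y : ℝ}, 0 < y → (2 : ℝ) ^ (logb 2 y * (x * y)) = y ^ (x * y) := fun hy => by
    rw [rpow_mul zero_le_two, rpow_logb two_pos (by norm_num) hy]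
  rw [← hpow hδ0, ← hpow (sub_pos.mpr hδ1), ← rpow_add two_pos, ← rpow_neg zero_le_two, binEnt]
  ring_nf

theorem rpow_mul_rpow_sub_le_of_le {p q N s t : ℝ} (hp : 0 < p) (hpq : p ≤ q) (hst : s ≤ t) :
    p ^ t * q ^ (N - t) ≤ p ^ s * q ^ (N - s) := by
  have hq : 0 < q := hp.trans_le hpq
  have hsplit : p ^ t * q ^ (N - t) = p ^ s * q ^ (N - s) * (p / q) ^ (t - s) := by
    rw [div_rpow hp.le hq.le, show N - t = (N - s) - (t - s) by ring, rpow_sub hq,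
      show t = s + (t - s) by ring, rpow_add hp]
    field_simp
    ring_nf
  rw [hsplit]
  exact mul_le_of_le_one_right (by positivity)
    (rpow_le_one (by positivity) ((div_le_one hq).mpr hpq) (sub_nonneg.mpr hst))

theorem sum_range_choose_mul_pow_le_one {p : ℝ} (hp0 : 0 ≤ p) (hp1 : p ≤ 1) {m n : ℕ}
    (hmn : m ≤ n) :
    ∑ w ∈ range (m + 1), (n.choose w : ℝ) * (p ^ w * (1 - p) ^ (n - w)) ≤ 1 := by
  calc ∑ w ∈ range (m + 1), (n.choose w : ℝ) * (p ^ w * (1 - p) ^ (n - w))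
      ≤ ∑ w ∈ range (n + 1), (n.choose w : ℝ) * (p ^ w * (1 - p) ^ (n - w)) :=
        sum_le_sum_of_subset_of_nonneg (range_subset_range.mpr (by omega))
          fun w _ _ => by have := sub_nonneg.mpr hp1; positivity
    _ = (p + (1 - p)) ^ n := by
        rw [add_pow]
        exact sum_congr rfl fun w _ => by ring
    _ = 1 := by simp

theorem stmt_0_general (n : ℕ) (δ : ℝ) (hδ0 : 0 ≤ δ) (hδ : δ ≤ 1/2) :
    (∑ w ∈ Finset.range (⌊(n : ℝ) * δ⌋₊ + 1), (n.choose w : ℝ)) ≤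
      (2 : ℝ) ^ ((n : ℝ) * binEnt δ) := by
  rcases hδ0.eq_or_lt with rfl | hδpos
  · simp [binEnt]
  have hδ1 : δ < 1 := by linarith
  set m := ⌊(n : ℝ) * δ⌋₊
  have hm : (m : ℝ) ≤ n * δ := Nat.floor_le (by positivity)
  have hmn : m ≤ n := by exact_mod_cast hm.trans (by nlinarith : (n : ℝ) * δ ≤ n)
  set A := δ ^ ((n : ℝ) * δ) * (1 - δ) ^ ((n : ℝ) * (1 - δ)) with hA
  have hA_le : ∀ w ∈ range (m + 1), A ≤ δ ^ w * (1 - δ) ^ (n - w) := fun w hw => by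
    have hwm : w ≤ m := Nat.lt_succ_iff.mp (mem_range.mp hw)
    have hw : (w : ℝ) ≤ n * δ := le_trans (by exact_mod_cast hwm) hm
    rw [← rpow_natCast, ← rpow_natCast, Nat.cast_sub (hwm.trans hmn), hA,
      show (n : ℝ) * (1 - δ) = n - n * δ by ring]
    exact rpow_mul_rpow_sub_le_of_le hδpos (by linarith) hw
  rw [two_rpow_mul_binEnt hδpos hδ1, ← one_div, le_div_iff₀ (by positivity), sum_mul]
  calc ∑ w ∈ range (m + 1), (n.choose w : ℝ) * A
      ≤ ∑ w ∈ range (m + 1), (n.choose w : ℝ) * (δ ^ w * (1 - δ) ^ (n - w)) :=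
        sum_le_sum fun w hw => mul_le_mul_of_nonneg_left (hA_le w hw) (by positivity)
    _ ≤ 1 := sum_range_choose_mul_pow_le_one hδ0 hδ1.le hmn

theorem stmt_0 (n : ℕ) (hn : 1 ≤ n) (δ : ℝ) (hδ0 : 0 ≤ δ) (hδ : δ ≤ 1/2) :
    (∑ w ∈ Finset.range (⌊(n : ℝ) * δ⌋₊ + 1), (n.choose w : ℝ)) ≤
      (2 : ℝ) ^ ((n : ℝ) * binEnt δ) :=
  stmt_0_general n δ hδ0 hδ
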